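/- arXiv:1110.4938 — 3 statements merged into one kernel-verified Lean document; each statement's English description precedes it below -/
import Mathlib

section
/- For every β ∈ ℂ with |β| < 1 and every z in the open unit disc 𝔻, one has Kμ(z) − z·conj(β)·K(ξ̄μ)(z) ≠ 0 and the characteristic function of Û_β satisfies θ_β(z) = −β + z(1 − |β|²) · K(ξ̄μ)(z) / (Kμ(z) − z·conj(β)·K(ξ̄μ)(z)). -/
open MeasureTheory Filter ContinuousLinearMap
open scoped ENNReal Topology ComplexConjugate

noncomputable section

/-- The Cauchy transform `K(fτ)(z) = ∫ f(ξ)/(1 - conj(ξ) z) dτ(ξ)` of the measure `fτ`. -/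
def cauchyT (τ : Measure ℂ) (f : ℂ → ℂ) (z : ℂ) : ℂ :=
  ∫ ξ, f ξ / (1 - conj ξ * z) ∂τ

/-- The function `ξ ↦ conj ξ`. -/
def xibarFun : ℂ → ℂ := fun ξ => conj ξ

/-- The constant function `1`. -/
def oneFun : ℂ → ℂ := fun _ => 1

/-- The operator `Û_γ = M_ξ + (γ - 1)⟨·, ξ̄⟩1` on `L²(μ)`, where `Mxi` is multiplication by
the independent variable, `xibar` is the function `ξ ↦ conj ξ` and `one` is the constant
function `1`.  (Here `⟨f, ξ̄⟩ = ∫ f(ξ) ξ dμ(ξ)` is linear in `f`.) -/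
def clarkOp (μ : Measure ℂ) (Mxi : Lp ℂ 2 μ →L[ℂ] Lp ℂ 2 μ) (xibar one : Lp ℂ 2 μ)
    (γ : ℂ) : Lp ℂ 2 μ →L[ℂ] Lp ℂ 2 μ :=
  Mxi + (γ - 1) • ((innerSL ℂ xibar).smulRight one)

/-- The scalar characteristic function
`θ(z) = ⟨(-U + z D₊ (I - z U*)⁻¹ D) ξ̄, 1⟩` of a contraction `U` on `L²(μ)` with defect
operators `Dm = (I - U*U)^{1/2}` and `Ds = (I - U U*)^{1/2}`. -/
def charF {μ : Measure ℂ} (U Dm Ds : Lp ℂ 2 μ →L[ℂ] Lp ℂ 2 μ) (xibar one : Lp ℂ 2 μ)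
    (z : ℂ) : ℂ :=
  inner ℂ one ((-U + z • (Ds ∘L Ring.inverse (1 - z • ContinuousLinearMap.adjoint U) ∘L Dm))
    xibar)

/-- `T^{(k)}`: nonnegative powers of `T`; powers of the adjoint for negative `k`. -/
def zpowOp {E : Type*} [NormedAddCommGroup E] [InnerProductSpace ℂ E] [CompleteSpace E]
    (T : E →L[ℂ] E) (k : ℤ) : E →L[ℂ] E :=
  if 0 ≤ k then T ^ k.toNat else (ContinuousLinearMap.adjoint T) ^ (-k).toNat

/-- Normalized Lebesgue (arclength) measure on the unit circle `𝕋`, as a measure on `ℂ`. -/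
def mCircle : Measure ℂ :=
  (ENNReal.ofReal (2 * Real.pi))⁻¹ •
    (volume.restrict (Set.Ioc (0:ℝ) (2 * Real.pi))).map (circleMap 0 1)

/-- A function on the disc is *inner* if its radial limits exist and have modulus one at
`m`-almost every point of the unit circle. -/
def IsInnerFun (f : ℂ → ℂ) : Prop :=
  ∀ᵐ ξ ∂mCircle, ∃ L : ℂ,
    Tendsto (fun r : ℝ => f ((r : ℂ) * ξ)) (𝓝[<] (1:ℝ)) (𝓝 L) ∧ ‖L‖ = 1

open scoped InnerProductSpace

/-! The operator `Û_β` sends `ξ̄` to `β • 1` and `Û_β*` sends `1` to `conj β • ξ̄`, so both defect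
operators act on these vectors as multiplication by `√(1 - |β|²)`. The Cauchy kernel
`k_z = ξ̄ / (1 - ξ̄ z)` lies in `L²(μ)` and satisfies
`(I - z Û_β*) k_z = (Kμ(z) - z conj β K(ξ̄μ)(z)) • ξ̄`, using `Kμ = 1 + z K(ξ̄μ)`. Since `Û_β` is a
contraction, `I - z Û_β*` is invertible; as `k_z ≠ 0` the coefficient cannot vanish, and dividing
by it gives `(I - z Û_β*)⁻¹ ξ̄`. Pairing with `1` yields the formula for `θ_β`. -/

lemma norm_le_one_of_mul_self_eq_one_sub_star_mul_self {A : Type*} [CStarAlgebra A]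
    [PartialOrder A] [StarOrderedRing A] {a d : A} (hd : IsSelfAdjoint d)
    (h : d * d = 1 - star a * a) : ‖a‖ ≤ 1 := by
  have hle : star a * a ≤ 1 := by
    have := star_mul_self_nonneg d
    rwa [hd.star_eq, h, sub_nonneg] at this
  have := (CStarAlgebra.norm_le_one_iff_of_nonneg _ (star_mul_self_nonneg a)).mpr hle
  rw [CStarRing.norm_star_mul_self] at this
  nlinarith [norm_nonneg a]

lemma Ring.inverse_one_sub_apply_of_apply_eq {𝕜 E : Type*} [NontriviallyNormedField 𝕜]
    [NormedAddCommGroup E] [NormedSpace 𝕜 E] [CompleteSpace E] {T : E →L[𝕜] E} (hT : ‖T‖ < 1)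
    {v w : E} (h : (1 - T) w = v) : Ring.inverse (1 - T) v = w := by
  rw [NormedRing.inverse_one_sub _ hT, ← h, ← mul_apply_eq_comp,
    ← Units.val_oneSub T hT, Units.inv_mul, one_apply_eq_self]

section Hilbert

variable {E : Type*} [NormedAddCommGroup E] [InnerProductSpace ℂ E]

lemma ContinuousLinearMap.IsPositive.apply_eq_smul_of_apply_apply_eq {T : E →L[ℂ] E}
    (hT : T.IsPositive) {s : ℝ} (hs : 0 < s) {x : E} (h : T (T x) = ((s : ℂ) ^ 2) • x) :
    T x = (s : ℂ) • x := by
  set y := T x - (s : ℂ) • x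
  have hTy : T y = -((s : ℂ) • y) := by
    simp only [y, map_sub, map_smul, h]
    module
  -- `T` has the eigenvalue `-s < 0` at `y`, which positivity forbids unless `y = 0`
  have hnonneg := hT.re_inner_nonneg_left y
  rw [hTy, inner_neg_left, inner_smul_left, inner_self_eq_norm_sq_to_K] at hnonneg
  have hsy : 0 ≤ -(s * ‖y‖ ^ 2) := by simpa [← Complex.ofReal_pow] using hnonneg
  have hy : ‖y‖ ^ 2 = 0 := le_antisymm (by nlinarith) (sq_nonneg _)
  simpa [y, sub_eq_zero] using hy

lemma ContinuousLinearMap.IsPositive.apply_eq_sqrt_smul_of_comp_self_eq [CompleteSpace E]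
    {U D : E →L[ℂ] E} (hD : D.IsPositive) (hD2 : D ∘L D = 1 - adjoint U ∘L U) {e u : E} {β : ℂ}
    (hβ : ‖β‖ < 1)
    (hUe : U e = β • u) (hUu : adjoint U u = conj β • e) :
    D e = (√(1 - ‖β‖ ^ 2) : ℂ) • e := by
  have hpos : 0 < 1 - ‖β‖ ^ 2 := by nlinarith [norm_nonneg β]
  refine hD.apply_eq_smul_of_apply_apply_eq (Real.sqrt_pos.mpr hpos) ?_
  have hsq : ((√(1 - ‖β‖ ^ 2) : ℝ) : ℂ) ^ 2 = 1 - β * conj β := by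
    rw [← Complex.ofReal_pow, Real.sq_sqrt hpos.le, Complex.mul_conj, Complex.normSq_eq_norm_sq]
    push_cast
    ring
  rw [← comp_apply, hD2, sub_apply, one_apply_eq_self, comp_apply, hUe, map_smul, hUu,
    smul_smul, hsq, sub_smul, one_smul]

end Hilbert

lemma charF_eq_of_apply_eq {μ : Measure ℂ} {U Dm Ds : Lp ℂ 2 μ →L[ℂ] Lp ℂ 2 μ}
    (hDs : IsSelfAdjoint Ds) {e u w : Lp ℂ 2 μ} {β z c : ℂ} {s : ℝ} (hu : ⟪u, u⟫_ℂ = 1)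
    (hUe : U e = β • u) (hDm : Dm e = (s : ℂ) • e) (hDsu : Ds u = (s : ℂ) • u)
    (hz : ‖z • adjoint U‖ < 1) (hw : (1 - z • adjoint U) w = c • e) (hc : c ≠ 0) :
    charF U Dm Ds e u z = -β + z * s ^ 2 * ⟪u, w⟫_ℂ / c := by
  have hres : Ring.inverse (1 - z • adjoint U) e = c⁻¹ • w :=
    Ring.inverse_one_sub_apply_of_apply_eq hz
      (by rw [map_smul, hw, smul_smul, inv_mul_cancel₀ hc, one_smul])
  have hDsw : ⟪u, Ds w⟫_ℂ = s * ⟪u, w⟫_ℂ := by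
    rw [← hDs.adjoint_eq, adjoint_inner_right, hDsu, inner_smul_left, Complex.conj_ofReal]
  simp only [charF, add_apply, neg_apply, smul_apply, comp_apply, hUe, hDm, map_smul, hres,
    inner_add_right, inner_neg_right, inner_smul_right, hu, hDsw]
  field_simp

lemma MeasureTheory.L2.inner_eq_integral_of_ae_eq {α : Type*} [MeasurableSpace α]
    {μ : Measure α} {f g : Lp ℂ 2 μ} {f' g' : α → ℂ} (hf : f =ᵐ[μ] f') (hg : g =ᵐ[μ] g') :
    ⟪f, g⟫_ℂ = ∫ x, conj (f' x) * g' x ∂μ := by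
  rw [L2.inner_def]
  refine integral_congr_ae ?_
  filter_upwards [hf, hg] with x hfx hgx
  simp [hfx, hgx, mul_comm]

lemma MeasureTheory.L2.inner_self_eq_one_of_ae_norm_eq_one {α : Type*} [MeasurableSpace α]
    {μ : Measure α} [IsProbabilityMeasure μ] {f : Lp ℂ 2 μ} (hf : ∀ᵐ x ∂μ, ‖f x‖ = 1) :
    ⟪f, f⟫_ℂ = 1 := by
  rw [L2.inner_def, integral_congr_ae (g := fun _ => (1 : ℂ))]
  · simp
  · filter_upwards [hf] with x hx
    simp [inner_self_eq_norm_sq_to_K, hx]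

lemma one_sub_norm_le_norm_one_sub_conj_mul {ξ : ℂ} (hξ : ‖ξ‖ = 1) (z : ℂ) :
    1 - ‖z‖ ≤ ‖1 - conj ξ * z‖ := by
  simpa [hξ] using norm_sub_norm_le (1 : ℂ) (conj ξ * z)

lemma one_sub_conj_mul_ne_zero {ξ z : ℂ} (hξ : ‖ξ‖ = 1) (hz : ‖z‖ < 1) :
    1 - conj ξ * z ≠ 0 :=
  norm_pos_iff.mp (by linarith [one_sub_norm_le_norm_one_sub_conj_mul hξ z])

section UnitCircle

variable {μ : Measure ℂ}

lemma ae_norm_eq_one_of_measure_compl_sphere (hμ : μ (Metric.sphere (0 : ℂ) 1)ᶜ = 0) :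
    ∀ᵐ ξ ∂μ, ‖ξ‖ = 1 :=
  measure_mono_null (fun ξ hξ => by simpa using hξ) hμ

lemma memLp_conj_div_one_sub_conj_mul [IsFiniteMeasure μ] (hξ : ∀ᵐ ξ ∂μ, ‖ξ‖ = 1) {z : ℂ}
    (hz : ‖z‖ < 1) (p : ℝ≥0∞) : MemLp (fun ξ => conj ξ / (1 - conj ξ * z)) p μ := by
  refine MemLp.of_bound (Measurable.aestronglyMeasurable (by fun_prop)) (1 - ‖z‖)⁻¹ ?_
  filter_upwards [hξ] with ξ h
  rw [norm_div, Complex.norm_conj, h, one_div]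
  exact inv_anti₀ (by linarith) (one_sub_norm_le_norm_one_sub_conj_mul h z)

lemma exists_ne_zero_ae_eq_conj_div_one_sub_conj_mul [IsProbabilityMeasure μ]
    (hξ : ∀ᵐ ξ ∂μ, ‖ξ‖ = 1) {z : ℂ} (hz : ‖z‖ < 1) :
    ∃ w : Lp ℂ 2 μ, w ≠ 0 ∧ w =ᵐ[μ] fun ξ => conj ξ / (1 - conj ξ * z) := by
  have hmem := memLp_conj_div_one_sub_conj_mul hξ hz 2
  refine ⟨hmem.toLp _, fun h0 => ?_, hmem.coeFn_toLp⟩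
  have hzero := (Lp.eq_zero_iff_ae_eq_zero.mp h0).symm.trans hmem.coeFn_toLp
  obtain ⟨ξ, hξ1, hξ0⟩ := (hξ.and hzero).exists
  refine div_ne_zero ?_ (one_sub_conj_mul_ne_zero hξ1 hz) hξ0.symm
  rw [← norm_ne_zero_iff, Complex.norm_conj, hξ1]
  exact one_ne_zero

lemma cauchyT_oneFun_eq [IsProbabilityMeasure μ] (hξ : ∀ᵐ ξ ∂μ, ‖ξ‖ = 1) {z : ℂ}
    (hz : ‖z‖ < 1) : cauchyT μ oneFun z = 1 + z * cauchyT μ xibarFun z := by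
  have hkernel : (fun ξ => oneFun ξ / (1 - conj ξ * z))
      =ᵐ[μ] fun ξ => 1 + z * (conj ξ / (1 - conj ξ * z)) := by
    filter_upwards [hξ] with ξ h
    have := one_sub_conj_mul_ne_zero h hz
    simp only [oneFun]
    field_simp
    ring
  rw [cauchyT, integral_congr_ae hkernel, integral_add (integrable_const 1)
    ((memLp_one_iff_integrable.mp (memLp_conj_div_one_sub_conj_mul hξ hz 1)).const_mul z),
    integral_const, integral_const_mul]
  simp [cauchyT, xibarFun]

lemma inner_eq_cauchyT_xibarFun {v w : Lp ℂ 2 μ} (hv : ∀ᵐ ξ ∂μ, v ξ = 1) {z : ℂ}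
    (hw : w =ᵐ[μ] fun ξ => conj ξ / (1 - conj ξ * z)) :
    ⟪v, w⟫_ℂ = cauchyT μ xibarFun z := by
  rw [L2.inner_eq_integral_of_ae_eq hv hw, cauchyT]
  simp [xibarFun]

lemma adjoint_apply_ae_eq_conj_mul (hξ : ∀ᵐ ξ ∂μ, ‖ξ‖ = 1) {M : Lp ℂ 2 μ →L[ℂ] Lp ℂ 2 μ}
    (hM : ∀ f : Lp ℂ 2 μ, ∀ᵐ ξ ∂μ, M f ξ = ξ * f ξ) (f : Lp ℂ 2 μ) :
    adjoint M f =ᵐ[μ] fun ξ => conj ξ * f ξ := by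
  have hmem : MemLp (fun ξ => conj ξ * f ξ) 2 μ := by
    refine (Lp.memLp f).of_le (by fun_prop) ?_
    filter_upwards [hξ] with ξ h
    simp [h]
  suffices adjoint M f = hmem.toLp _ from this ▸ hmem.coeFn_toLp
  refine ext_inner_right ℂ fun g => ?_
  rw [adjoint_inner_left, L2.inner_eq_integral_of_ae_eq .rfl (hM g),
    L2.inner_eq_integral_of_ae_eq hmem.coeFn_toLp .rfl]
  simp only [map_mul, Complex.conj_conj]
  congr 1 with ξ
  ring

end UnitCircle

section ClarkOperator

variable {μ : Measure ℂ} {Mxi : Lp ℂ 2 μ →L[ℂ] Lp ℂ 2 μ} {one xibar : Lp ℂ 2 μ}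

lemma clarkOp_apply (γ : ℂ) (f : Lp ℂ 2 μ) :
    clarkOp μ Mxi xibar one γ f = Mxi f + ((γ - 1) * ⟪xibar, f⟫_ℂ) • one := by
  simp [clarkOp, smul_smul]

lemma adjoint_clarkOp_apply (γ : ℂ) (f : Lp ℂ 2 μ) :
    adjoint (clarkOp μ Mxi xibar one γ) f
      = adjoint Mxi f + (conj (γ - 1) * ⟪one, f⟫_ℂ) • xibar := by
  have hrank : adjoint ((innerSL ℂ xibar).smulRight one) = (innerSL ℂ one).smulRight xibar :=
    InnerProductSpace.adjoint_rankOne (𝕜 := ℂ) one xibar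
  simp [clarkOp, map_add, LinearIsometryEquiv.map_smulₛₗ, hrank, smul_smul]

variable [IsProbabilityMeasure μ]

lemma clarkOp_apply_xibar (hξ : ∀ᵐ ξ ∂μ, ‖ξ‖ = 1)
    (hMxi : ∀ f : Lp ℂ 2 μ, ∀ᵐ ξ ∂μ, Mxi f ξ = ξ * f ξ)
    (hone : ∀ᵐ ξ ∂μ, one ξ = 1) (hxibar : ∀ᵐ ξ ∂μ, xibar ξ = conj ξ) (γ : ℂ) :
    clarkOp μ Mxi xibar one γ xibar = γ • one := by
  have hMxi_xibar : Mxi xibar = one := by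
    refine Lp.ext ?_
    filter_upwards [hMxi xibar, hxibar, hone, hξ] with ξ h1 h2 h3 h4
    rw [h1, h2, h3, Complex.mul_conj, Complex.normSq_eq_norm_sq, h4]
    norm_num
  have hxibar_norm : ⟪xibar, xibar⟫_ℂ = 1 :=
    L2.inner_self_eq_one_of_ae_norm_eq_one (by filter_upwards [hxibar, hξ]; simp_all)
  rw [clarkOp_apply, hMxi_xibar, hxibar_norm, mul_one, sub_smul, one_smul, add_sub_cancel]

lemma adjoint_clarkOp_apply_one (hξ : ∀ᵐ ξ ∂μ, ‖ξ‖ = 1)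
    (hMxi : ∀ f : Lp ℂ 2 μ, ∀ᵐ ξ ∂μ, Mxi f ξ = ξ * f ξ)
    (hone : ∀ᵐ ξ ∂μ, one ξ = 1) (hxibar : ∀ᵐ ξ ∂μ, xibar ξ = conj ξ) (γ : ℂ) :
    adjoint (clarkOp μ Mxi xibar one γ) one = conj γ • xibar := by
  have hMxi_one : adjoint Mxi one = xibar := by
    refine Lp.ext ?_
    filter_upwards [adjoint_apply_ae_eq_conj_mul hξ hMxi one, hone, hxibar] with ξ h1 h2 h3
    rw [h1, h2, h3, mul_one]
  have hone_norm : ⟪one, one⟫_ℂ = 1 :=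
    L2.inner_self_eq_one_of_ae_norm_eq_one (by filter_upwards [hone]; simp_all)
  rw [adjoint_clarkOp_apply, hMxi_one, hone_norm, mul_one, map_sub, map_one, sub_smul,
    one_smul, add_sub_cancel]

lemma one_sub_smul_adjoint_clarkOp_apply (hξ : ∀ᵐ ξ ∂μ, ‖ξ‖ = 1)
    (hMxi : ∀ f : Lp ℂ 2 μ, ∀ᵐ ξ ∂μ, Mxi f ξ = ξ * f ξ)
    (hone : ∀ᵐ ξ ∂μ, one ξ = 1) (hxibar : ∀ᵐ ξ ∂μ, xibar ξ = conj ξ) {z : ℂ} (hz : ‖z‖ < 1)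
    (γ : ℂ) {w : Lp ℂ 2 μ} (hw : w =ᵐ[μ] fun ξ => conj ξ / (1 - conj ξ * z)) :
    (1 - z • adjoint (clarkOp μ Mxi xibar one γ)) w
      = (cauchyT μ oneFun z - z * conj γ * cauchyT μ xibarFun z) • xibar := by
  have hMxi_w : w - z • adjoint Mxi w = xibar := by
    refine Lp.ext ?_
    filter_upwards [Lp.coeFn_sub w (z • adjoint Mxi w), Lp.coeFn_smul z (adjoint Mxi w),
      adjoint_apply_ae_eq_conj_mul hξ hMxi w, hw, hxibar, hξ] with ξ h1 h2 h3 h4 h5 h6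
    have := one_sub_conj_mul_ne_zero h6 hz
    simp only [h1, Pi.sub_apply, h2, Pi.smul_apply, smul_eq_mul, h3, h4, h5]
    field_simp
  rw [sub_apply, one_apply_eq_self, smul_apply, adjoint_clarkOp_apply,
    inner_eq_cauchyT_xibarFun hone hw, cauchyT_oneFun_eq hξ hz, smul_add, ← sub_sub, hMxi_w,
    map_sub, map_one]
  module

end ClarkOperator

theorem statement3
    (μ : Measure ℂ) [IsProbabilityMeasure μ] (hμ : μ (Metric.sphere (0:ℂ) 1)ᶜ = 0)
    (Mxi : Lp ℂ 2 μ →L[ℂ] Lp ℂ 2 μ)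
    (hMxi : ∀ f : Lp ℂ 2 μ, ∀ᵐ ξ ∂μ, (Mxi f) ξ = ξ * f ξ)
    (one xibar : Lp ℂ 2 μ)
    (hone : ∀ᵐ ξ ∂μ, one ξ = 1) (hxibar : ∀ᵐ ξ ∂μ, xibar ξ = conj ξ)
    (β : ℂ) (hβ : ‖β‖ < 1)
    -- `Dβ` and `Dsβ` are the positive square roots of `I - Û_β* Û_β` and `I - Û_β Û_β*`
    (Dβ Dsβ : Lp ℂ 2 μ →L[ℂ] Lp ℂ 2 μ)
    (hDβpos : Dβ.IsPositive)
    (hDβ : Dβ ∘L Dβ = 1 - ContinuousLinearMap.adjoint (clarkOp μ Mxi xibar one β) ∘L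
      clarkOp μ Mxi xibar one β)
    (hDsβpos : Dsβ.IsPositive)
    (hDsβ : Dsβ ∘L Dsβ = 1 - clarkOp μ Mxi xibar one β ∘L
      ContinuousLinearMap.adjoint (clarkOp μ Mxi xibar one β))
    (z : ℂ) (hz : ‖z‖ < 1) :
    cauchyT μ oneFun z - z * conj β * cauchyT μ xibarFun z ≠ 0 ∧
    charF (clarkOp μ Mxi xibar one β) Dβ Dsβ xibar one z =
      -β + z * (1 - (‖β‖ : ℂ) ^ 2) * cauchyT μ xibarFun z /
        (cauchyT μ oneFun z - z * conj β * cauchyT μ xibarFun z) := by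
  have hξ := ae_norm_eq_one_of_measure_compl_sphere hμ
  set U := clarkOp μ Mxi xibar one β
  have hUe : U xibar = β • one := clarkOp_apply_xibar hξ hMxi hone hxibar β
  have hUu : adjoint U one = conj β • xibar := adjoint_clarkOp_apply_one hξ hMxi hone hxibar β
  have hDβe := hDβpos.apply_eq_sqrt_smul_of_comp_self_eq hDβ hβ hUe hUu
  have hDsβu : Dsβ one = (√(1 - ‖β‖ ^ 2) : ℂ) • one := by
    simpa using hDsβpos.apply_eq_sqrt_smul_of_comp_self_eq (U := adjoint U)
      (by rwa [adjoint_adjoint]) (by rwa [Complex.norm_conj]) hUu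
      (by rw [adjoint_adjoint, hUe, Complex.conj_conj])
  have hUz : ‖z • adjoint U‖ < 1 := by
    have hU : ‖U‖ ≤ 1 :=
      norm_le_one_of_mul_self_eq_one_sub_star_mul_self hDβpos.isSelfAdjoint hDβ
    rw [norm_smul, LinearIsometryEquiv.norm_map]
    exact mul_lt_one_of_nonneg_of_lt_one_left (norm_nonneg z) hz hU
  obtain ⟨w, hw0, hw⟩ := exists_ne_zero_ae_eq_conj_div_one_sub_conj_mul hξ hz
  have hres := one_sub_smul_adjoint_clarkOp_apply hξ hMxi hone hxibar hz β hw
  have hK : cauchyT μ oneFun z - z * conj β * cauchyT μ xibarFun z ≠ 0 := by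
    intro h0
    rw [h0, zero_smul] at hres
    exact hw0 (by simpa using (Ring.inverse_one_sub_apply_of_apply_eq hUz hres).symm)
  refine ⟨hK, ?_⟩
  rw [charF_eq_of_apply_eq hDsβpos.isSelfAdjoint
    (L2.inner_self_eq_one_of_ae_norm_eq_one (by filter_upwards [hone]; simp_all)) hUe hDβe
    hDsβu hUz hres hK, inner_eq_cauchyT_xibarFun hone hw, ← Complex.ofReal_pow,
    Real.sq_sqrt (by nlinarith [norm_nonneg β])]
  norm_cast

end
end

section
/- (Livsic relation) For every β ∈ ℂ with |β| < 1 and every z in the open unit disc 𝔻, the characteristic functions satisfy θ_β(z)·(1 − conj(β)·θ(z)) = θ(z) − β, i.e. θ_β is the linear fractional transform (−β + θ)/(1 − conj(β)θ) of θ. Consequently, θ_β is inner if and only if θ is inner. -/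
open MeasureTheory Filter ContinuousLinearMap
open scoped ENNReal Topology ComplexConjugate

noncomputable section

/-!
`M_ξ` is unitary on `L²(μ)` and maps `ξ̄` to `1`, so `Û_γ` is a rank-one perturbation of a
unitary with `Û_γ* Û_γ = I - (1 - |γ|²)⟨·, ξ̄⟩ξ̄` and `Û_γ Û_γ* = I - (1 - |γ|²)⟨·, 1⟩1`.
Hence the defect operators act on `ξ̄` and `1` as multiplication by `√(1 - |γ|²)`, and
`θ_γ(z) = -γ + (1 - |γ|²) z G_γ(z)` with `G_γ(z) = ⟨(I - z Û_γ*)⁻¹ ξ̄, 1⟩`.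
As `Û_β* - Û₀* = conj β ⟨·, 1⟩ ξ̄` has rank one, the Sherman–Morrison identity gives
`G_β = (1 + z conj β G_β) G₀`, and eliminating `G_β` yields the Livšic relation.
Innerness is preserved because `w ↦ (w - β) / (1 - conj β w)` maps the unit circle to itself.
-/

open scoped InnerProductSpace

lemma ContinuousLinearMap.IsPositive.apply_eq_sqrt_smul_of_apply_apply
    {E : Type*} [NormedAddCommGroup E] [InnerProductSpace ℂ E]
    {T : E →L[ℂ] E} (hT : T.IsPositive) {r : ℝ} (hr : 0 < r) {x : E}
    (hx : T (T x) = (r : ℂ) • x) : T x = (√r : ℂ) • x := by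
  -- `y := T x - √r x` satisfies `(T + √r) y = 0`, and `T + √r` is bounded below by `√r`
  set s : ℝ := √r
  set y := T x - (s : ℂ) • x
  have hy : T y + (s : ℂ) • y = 0 := by
    have hs : (s : ℂ) * s = r := by rw [← Complex.ofReal_mul, Real.mul_self_sqrt hr.le]
    simp only [y, map_sub, map_smul, hx, smul_sub, smul_smul, hs]
    abel
  have h0 : RCLike.re ⟪T y, y⟫_ℂ + s * ‖y‖ ^ 2 = 0 := by
    have := congrArg (fun w => RCLike.re ⟪w, y⟫_ℂ) hy
    simpa [inner_add_left, inner_smul_left, ← Complex.ofReal_pow] using this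
  have hnorm : ‖y‖ ^ 2 ≤ 0 := by
    refine le_of_mul_le_mul_left (a := s) ?_ (Real.sqrt_pos.mpr hr)
    linarith [hT.re_inner_nonneg_left y]
  rwa [sq_nonpos_iff, norm_eq_zero, sub_eq_zero] at hnorm

lemma inner_ring_inverse_sub_smul_smulRight {E : Type*} [NormedAddCommGroup E]
    [InnerProductSpace ℂ E] {A : E →L[ℂ] E} {e u : E} {c : ℂ} (hA : IsUnit A)
    (hB : IsUnit (A - c • (innerSL ℂ u).smulRight e)) :
    ⟪u, Ring.inverse (A - c • (innerSL ℂ u).smulRight e) e⟫_ℂ =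
      (1 + c * ⟪u, Ring.inverse (A - c • (innerSL ℂ u).smulRight e) e⟫_ℂ) *
        ⟪u, Ring.inverse A e⟫_ℂ := by
  set B := A - c • (innerSL ℂ u).smulRight e
  set g := Ring.inverse B e
  have hBg : B g = e := congr($(Ring.mul_inverse_cancel B hB) e)
  have hAg : A g = (1 + c * ⟪u, g⟫_ℂ) • e := by
    have : A g = B g + (c * ⟪u, g⟫_ℂ) • e := by simp [B, mul_smul]
    rw [this, hBg, add_smul, one_smul]
  have hg : g = (1 + c * ⟪u, g⟫_ℂ) • Ring.inverse A e := by
    rw [← map_smul, ← hAg]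
    exact congr($(Ring.inverse_mul_cancel A hA) g).symm
  conv_lhs => rw [hg]
  rw [inner_smul_right]

section ClarkPerturbation

variable {E : Type*} [NormedAddCommGroup E] [InnerProductSpace ℂ E]

def clarkPert (V : E →L[ℂ] E) (e u : E) (γ : ℂ) : E →L[ℂ] E :=
  V + (γ - 1) • (innerSL ℂ e).smulRight u

@[simp]
lemma clarkPert_apply (V : E →L[ℂ] E) (e u : E) (γ : ℂ) (x : E) :
    clarkPert V e u γ x = V x + ((γ - 1) * ⟪e, x⟫_ℂ) • u := by
  simp [clarkPert, mul_smul]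

lemma clarkPert_eq_add (V : E →L[ℂ] E) (e u : E) (γ : ℂ) :
    clarkPert V e u γ = clarkPert V e u 0 + γ • (innerSL ℂ e).smulRight u := by
  simp only [clarkPert, zero_sub, sub_smul, neg_smul, one_smul]
  abel

lemma clarkPert_apply_self {V : E →L[ℂ] E} {e u : E} (hVe : V e = u) (he : ‖e‖ = 1) (γ : ℂ) :
    clarkPert V e u γ e = γ • u := by
  rw [clarkPert_apply, hVe, inner_self_eq_norm_sq_to_K, he]
  module

variable [CompleteSpace E]

lemma adjoint_clarkPert (V : E →L[ℂ] E) (e u : E) (γ : ℂ) :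
    adjoint (clarkPert V e u γ) = clarkPert (adjoint V) u e (conj γ) := by
  refine ((eq_adjoint_iff _ _).mpr fun x y => ?_).symm
  simp only [clarkPert_apply, inner_add_left, inner_add_right, inner_smul_left,
    inner_smul_right, adjoint_inner_left, map_mul, map_sub, map_one, Complex.conj_conj,
    inner_conj_symm]
  ring

variable {V : E →L[ℂ] E} {e u : E}

lemma adjoint_clarkPert_apply_clarkPert (hV : V ∈ unitary (E →L[ℂ] E)) (hVe : V e = u)
    (he : ‖e‖ = 1) (γ : ℂ) (x : E) :
    adjoint (clarkPert V e u γ) (clarkPert V e u γ x) =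
      x - (((1 - ‖γ‖ ^ 2 : ℝ) : ℂ) * ⟪e, x⟫_ℂ) • e := by
  have hVV : ∀ y, adjoint V (V y) = y := fun y =>
    congr($(Unitary.star_mul_self_of_mem hV) y)
  have hu : ⟪u, V x⟫_ℂ = ⟪e, x⟫_ℂ := by
    rw [← hVe, inner_map_map_of_mem_unitary hV]
  have huu : ⟪u, u⟫_ℂ = 1 := by
    rw [← hVe, inner_map_map_of_mem_unitary hV, inner_self_eq_norm_sq_to_K, he]; simp
  rw [adjoint_clarkPert, clarkPert_apply, clarkPert_apply, map_add, map_smul, hVV, ← hVe, hVV,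
    inner_add_right, inner_smul_right, hVe, hu, huu]
  push_cast
  rw [← Complex.mul_conj']
  module

lemma clarkPert_apply_adjoint_clarkPert (hV : V ∈ unitary (E →L[ℂ] E)) (hVe : V e = u)
    (he : ‖e‖ = 1) (γ : ℂ) (y : E) :
    clarkPert V e u γ (adjoint (clarkPert V e u γ) y) =
      y - (((1 - ‖γ‖ ^ 2 : ℝ) : ℂ) * ⟪u, y⟫_ℂ) • u := by
  have hV' : adjoint V ∈ unitary (E →L[ℂ] E) := Unitary.star_mem hV
  have hVu : adjoint V u = e := by
    rw [← hVe]; exact congr($(Unitary.star_mul_self_of_mem hV) e)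
  have hu : ‖u‖ = 1 := by rw [← hVe, norm_map_of_mem_unitary hV, he]
  have := adjoint_clarkPert_apply_clarkPert hV' hVu hu (conj γ) y
  rwa [adjoint_clarkPert, adjoint_adjoint, Complex.conj_conj, Complex.norm_conj,
    ← adjoint_clarkPert] at this

lemma norm_clarkPert_le (hV : V ∈ unitary (E →L[ℂ] E)) (hVe : V e = u) (he : ‖e‖ = 1)
    {γ : ℂ} (hγ : ‖γ‖ ≤ 1) : ‖clarkPert V e u γ‖ ≤ 1 := by
  refine opNorm_le_bound _ zero_le_one fun x => ?_
  have h := congrArg RCLike.re <|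
    congrArg (⟪x, ·⟫_ℂ) (adjoint_clarkPert_apply_clarkPert hV hVe he γ x)
  simp only [adjoint_inner_right, inner_self_eq_norm_sq_to_K, inner_sub_right,
    inner_smul_right, ← inner_conj_symm x e, mul_assoc, Complex.mul_conj'] at h
  norm_cast at h
  simp only [RCLike.re_to_complex, Complex.sub_re, RCLike.ofReal_eq_complex_ofReal,
    Complex.ofReal_re] at h
  have : ‖clarkPert V e u γ x‖ ^ 2 ≤ ‖x‖ ^ 2 := by
    have hγ2 : 0 ≤ 1 - ‖γ‖ ^ 2 := by nlinarith [norm_nonneg γ]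
    rw [h]; nlinarith [mul_nonneg hγ2 (sq_nonneg ‖⟪e, x⟫_ℂ‖)]
  rw [one_mul]
  exact (pow_le_pow_iff_left₀ (norm_nonneg _) (norm_nonneg _) two_ne_zero).mp this

lemma isUnit_one_sub_smul_adjoint_clarkPert (hV : V ∈ unitary (E →L[ℂ] E)) (hVe : V e = u)
    (he : ‖e‖ = 1) {γ z : ℂ} (hγ : ‖γ‖ ≤ 1) (hz : ‖z‖ < 1) :
    IsUnit (1 - z • adjoint (clarkPert V e u γ)) := by
  refine isUnit_one_sub_of_norm_lt_one ?_
  calc ‖z • adjoint (clarkPert V e u γ)‖ ≤ ‖z‖ * 1 := by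
        rw [norm_smul, LinearIsometryEquiv.norm_map]
        exact mul_le_mul_of_nonneg_left (norm_clarkPert_le hV hVe he hγ) (norm_nonneg z)
    _ < 1 := by rwa [mul_one]

lemma one_sub_smul_adjoint_clarkPert_eq (V : E →L[ℂ] E) (e u : E) (β z : ℂ) :
    1 - z • adjoint (clarkPert V e u β) =
      1 - z • adjoint (clarkPert V e u 0) - (z * conj β) • (innerSL ℂ u).smulRight e := by
  rw [adjoint_clarkPert, adjoint_clarkPert, map_zero, clarkPert_eq_add _ _ _ (conj β), smul_add,
    mul_smul]
  abel

end ClarkPerturbation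

lemma clarkOp_eq_clarkPert (μ : Measure ℂ) (Mxi : Lp ℂ 2 μ →L[ℂ] Lp ℂ 2 μ)
    (xibar one : Lp ℂ 2 μ) (γ : ℂ) : clarkOp μ Mxi xibar one γ = clarkPert Mxi xibar one γ :=
  rfl

lemma charF_clarkPert {μ : Measure ℂ} {V : Lp ℂ 2 μ →L[ℂ] Lp ℂ 2 μ} {e u : Lp ℂ 2 μ}
    (hV : V ∈ unitary (Lp ℂ 2 μ →L[ℂ] Lp ℂ 2 μ)) (hVe : V e = u) (he : ‖e‖ = 1)
    {γ : ℂ} (hγ : ‖γ‖ < 1) {D Ds : Lp ℂ 2 μ →L[ℂ] Lp ℂ 2 μ}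
    (hDpos : D.IsPositive) (hD : D ∘L D = 1 - adjoint (clarkPert V e u γ) ∘L clarkPert V e u γ)
    (hDspos : Ds.IsPositive)
    (hDs : Ds ∘L Ds = 1 - clarkPert V e u γ ∘L adjoint (clarkPert V e u γ)) (z : ℂ) :
    charF (clarkPert V e u γ) D Ds e u z =
      -γ + ((1 - ‖γ‖ ^ 2 : ℝ) : ℂ) * z *
        ⟪u, Ring.inverse (1 - z • adjoint (clarkPert V e u γ)) e⟫_ℂ := by
  set r : ℝ := 1 - ‖γ‖ ^ 2
  have hr : 0 < r := by nlinarith [norm_nonneg γ]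
  have hu : ‖u‖ = 1 := by rw [← hVe, norm_map_of_mem_unitary hV, he]
  have hee : ⟪e, e⟫_ℂ = 1 := by simp [he]
  have huu : ⟪u, u⟫_ℂ = 1 := by simp [hu]
  have hDe : D e = (√r : ℂ) • e := by
    refine hDpos.apply_eq_sqrt_smul_of_apply_apply hr ?_
    have := congr($hD e)
    simp only [comp_apply, sub_apply, one_apply_eq_self] at this
    rw [this, adjoint_clarkPert_apply_clarkPert hV hVe he, hee, mul_one, sub_sub_cancel]
  have hDsu : Ds u = (√r : ℂ) • u := by
    refine hDspos.apply_eq_sqrt_smul_of_apply_apply hr ?_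
    have := congr($hDs u)
    simp only [comp_apply, sub_apply, one_apply_eq_self] at this
    rw [this, clarkPert_apply_adjoint_clarkPert hV hVe he, huu, mul_one, sub_sub_cancel]
  have hsq : (√r : ℂ) * √r = r := by rw [← Complex.ofReal_mul, Real.mul_self_sqrt hr.le]
  rw [charF]
  simp only [add_apply, neg_apply, smul_apply, comp_apply, inner_add_right, inner_neg_right,
    inner_smul_right, clarkPert_apply_self hVe he, huu, hDe, map_smul,
    ← hDspos.inner_left_eq_inner_right, hDsu, inner_smul_left, Complex.conj_ofReal]
  linear_combination z * ⟪u, Ring.inverse (1 - z • adjoint (clarkPert V e u γ)) e⟫_ℂ * hsq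

lemma charF_clarkPert_mul_one_sub_conj_mul {μ : Measure ℂ} {V : Lp ℂ 2 μ →L[ℂ] Lp ℂ 2 μ}
    {e u : Lp ℂ 2 μ} (hV : V ∈ unitary (Lp ℂ 2 μ →L[ℂ] Lp ℂ 2 μ)) (hVe : V e = u)
    (he : ‖e‖ = 1) {β : ℂ} (hβ : ‖β‖ < 1) {D₀ Ds₀ D Ds : Lp ℂ 2 μ →L[ℂ] Lp ℂ 2 μ}
    (hD₀pos : D₀.IsPositive)
    (hD₀ : D₀ ∘L D₀ = 1 - adjoint (clarkPert V e u 0) ∘L clarkPert V e u 0)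
    (hDs₀pos : Ds₀.IsPositive)
    (hDs₀ : Ds₀ ∘L Ds₀ = 1 - clarkPert V e u 0 ∘L adjoint (clarkPert V e u 0))
    (hDpos : D.IsPositive) (hD : D ∘L D = 1 - adjoint (clarkPert V e u β) ∘L clarkPert V e u β)
    (hDspos : Ds.IsPositive)
    (hDs : Ds ∘L Ds = 1 - clarkPert V e u β ∘L adjoint (clarkPert V e u β))
    {z : ℂ} (hz : ‖z‖ < 1) :
    charF (clarkPert V e u β) D Ds e u z * (1 - conj β * charF (clarkPert V e u 0) D₀ Ds₀ e u z) =
      charF (clarkPert V e u 0) D₀ Ds₀ e u z - β := by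
  have hG := inner_ring_inverse_sub_smul_smulRight (c := z * conj β) (u := u) (e := e)
    (isUnit_one_sub_smul_adjoint_clarkPert hV hVe he (by simp) hz)
    (one_sub_smul_adjoint_clarkPert_eq V e u β z ▸
      isUnit_one_sub_smul_adjoint_clarkPert hV hVe he hβ.le hz)
  rw [← one_sub_smul_adjoint_clarkPert_eq] at hG
  rw [charF_clarkPert hV hVe he hβ hDpos hD hDspos hDs,
    charF_clarkPert hV hVe he (by simp) hD₀pos hD₀ hDs₀pos hDs₀]
  set w := ⟪u, Ring.inverse (1 - z • adjoint (clarkPert V e u 0)) e⟫_ℂ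
  rw [norm_zero]
  push_cast
  linear_combination ((1 - ‖β‖ ^ 2 : ℂ) * z) * hG + z * w * Complex.mul_conj' β

section MultiplicationByIndependentVariable

variable {μ : Measure ℂ}

lemma ae_norm_eq_one (hμ : μ (Metric.sphere (0:ℂ) 1)ᶜ = 0) : ∀ᵐ ξ ∂μ, ‖ξ‖ = 1 :=
  measure_eq_zero_iff_ae_notMem.mp hμ |>.mono fun ξ hξ => by simpa using hξ

lemma ae_mul_conj_eq_one (hμ : μ (Metric.sphere (0:ℂ) 1)ᶜ = 0) : ∀ᵐ ξ ∂μ, ξ * conj ξ = 1 :=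
  (ae_norm_eq_one hμ).mono fun ξ hξ => by simp [Complex.mul_conj', hξ]

variable {Mxi : Lp ℂ 2 μ →L[ℂ] Lp ℂ 2 μ}

lemma norm_mulVar_apply (hμ : μ (Metric.sphere (0:ℂ) 1)ᶜ = 0)
    (hMxi : ∀ f : Lp ℂ 2 μ, ∀ᵐ ξ ∂μ, (Mxi f) ξ = ξ * f ξ) (f : Lp ℂ 2 μ) :
    ‖Mxi f‖ = ‖f‖ := by
  have h : ∀ᵐ ξ ∂μ, ‖(Mxi f) ξ‖ = ‖f ξ‖ := by
    filter_upwards [hMxi f, ae_norm_eq_one hμ] with ξ hf hξ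
    rw [hf, norm_mul, hξ, one_mul]
  exact le_antisymm (Lp.norm_le_norm_of_ae_le (h.mono fun _ h => h.le))
    (Lp.norm_le_norm_of_ae_le (h.mono fun _ h => h.ge))

lemma mulVar_surjective (hμ : μ (Metric.sphere (0:ℂ) 1)ᶜ = 0)
    (hMxi : ∀ f : Lp ℂ 2 μ, ∀ᵐ ξ ∂μ, (Mxi f) ξ = ξ * f ξ) : Function.Surjective Mxi := by
  intro g
  have hmem : MemLp (fun ξ : ℂ => conj ξ * g ξ) 2 μ := by
    refine (Lp.memLp g).mono
      (Complex.continuous_conj.aestronglyMeasurable.mul (Lp.aestronglyMeasurable g)) ?_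
    filter_upwards [ae_norm_eq_one hμ] with ξ hξ
    simp [hξ]
  refine ⟨hmem.toLp _, Lp.ext ?_⟩
  filter_upwards [hMxi (hmem.toLp _), hmem.coeFn_toLp, ae_mul_conj_eq_one hμ] with ξ h1 h2 h3
  rw [h1, h2, ← mul_assoc, h3, one_mul]

lemma mulVar_mem_unitary (hμ : μ (Metric.sphere (0:ℂ) 1)ᶜ = 0)
    (hMxi : ∀ f : Lp ℂ 2 μ, ∀ᵐ ξ ∂μ, (Mxi f) ξ = ξ * f ξ) :
    Mxi ∈ unitary (Lp ℂ 2 μ →L[ℂ] Lp ℂ 2 μ) :=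
  (Unitary.linearIsometryEquiv.symm <| LinearIsometryEquiv.ofSurjective
    ⟨Mxi.toLinearMap, norm_mulVar_apply hμ hMxi⟩ (mulVar_surjective hμ hMxi)).property

lemma mulVar_apply_xibar (hμ : μ (Metric.sphere (0:ℂ) 1)ᶜ = 0)
    (hMxi : ∀ f : Lp ℂ 2 μ, ∀ᵐ ξ ∂μ, (Mxi f) ξ = ξ * f ξ) {one xibar : Lp ℂ 2 μ}
    (hone : ∀ᵐ ξ ∂μ, one ξ = 1) (hxibar : ∀ᵐ ξ ∂μ, xibar ξ = conj ξ) : Mxi xibar = one := by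
  refine Lp.ext ?_
  filter_upwards [hMxi xibar, hxibar, hone, ae_mul_conj_eq_one hμ] with ξ h1 h2 h3 h4
  rw [h1, h2, h3, h4]

end MultiplicationByIndependentVariable

lemma norm_L2_eq_one_of_ae_eq_one {μ : Measure ℂ} [IsProbabilityMeasure μ] {one : Lp ℂ 2 μ}
    (hone : ∀ᵐ ξ ∂μ, one ξ = 1) : ‖one‖ = 1 := by
  have h : ⟪one, one⟫_ℂ = 1 := by
    rw [L2.inner_def, integral_congr_ae (g := fun _ => (1 : ℂ))
      (by filter_upwards [hone] with ξ h; simp [h])]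
    simp
  refine (pow_eq_one_iff_of_nonneg (norm_nonneg one) two_ne_zero).mp ?_
  rw [← inner_self_eq_norm_sq (𝕜 := ℂ), h, RCLike.one_re]

lemma mCircle_ae_norm_eq_one : ∀ᵐ ξ ∂mCircle, ‖ξ‖ = 1 := by
  refine Measure.ae_smul_measure ?_ _
  rw [ae_map_iff (measurable_circleMap 0 1).aemeasurable
    (measurableSet_eq_fun continuous_norm.measurable measurable_const)]
  exact ae_of_all _ fun θ => by simp [norm_circleMap_zero]

lemma one_sub_conj_mul_ne_zero_s4 {b w : ℂ} (hb : ‖b‖ < 1) (hw : ‖w‖ ≤ 1) :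
    1 - conj b * w ≠ 0 := by
  refine sub_ne_zero.mpr fun h => ?_
  have : ‖conj b * w‖ < 1 := by
    rw [norm_mul, Complex.norm_conj]
    nlinarith [norm_nonneg b, norm_nonneg w]
  rw [← h, norm_one] at this
  exact lt_irrefl _ this

lemma norm_sub_div_one_sub_conj_mul {b w : ℂ} (hb : ‖b‖ < 1) (hw : ‖w‖ = 1) :
    ‖(w - b) / (1 - conj b * w)‖ = 1 := by
  have hww : w * conj w = 1 := by rw [Complex.mul_conj', hw]; simp
  have hnum : w - b = w * conj (1 - conj b * w) := by
    simp only [map_sub, map_mul, map_one, Complex.conj_conj]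
    linear_combination b * hww
  rw [norm_div, hnum, norm_mul, Complex.norm_conj, hw, one_mul,
    div_self (norm_ne_zero_iff.mpr (one_sub_conj_mul_ne_zero_s4 hb hw.le))]

lemma IsInnerFun.of_mul_one_sub_conj_mul_eq {f g : ℂ → ℂ} {b : ℂ} (hb : ‖b‖ < 1)
    (h : ∀ z : ℂ, ‖z‖ < 1 → f z * (1 - conj b * g z) = g z - b) (hg : IsInnerFun g) :
    IsInnerFun f := by
  -- on the disc, `1 - conj b * g z = 0` would force `g z = b` and then `1 = ‖b‖ ^ 2`
  have hden : ∀ z : ℂ, ‖z‖ < 1 → 1 - conj b * g z ≠ 0 := by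
    intro z hz h0
    have hgz : g z = b := by rw [← sub_eq_zero, ← h z hz, h0, mul_zero]
    rw [hgz, mul_comm, Complex.mul_conj'] at h0
    exact one_sub_conj_mul_ne_zero_s4 hb hb.le (by rw [mul_comm, Complex.mul_conj', h0])
  filter_upwards [hg, mCircle_ae_norm_eq_one] with ξ ⟨L, hL, hL1⟩ hξ
  refine ⟨(L - b) / (1 - conj b * L), ?_, norm_sub_div_one_sub_conj_mul hb hL1⟩
  refine ((hL.sub tendsto_const_nhds).div (tendsto_const_nhds.sub (tendsto_const_nhds.mul hL))
    (one_sub_conj_mul_ne_zero_s4 hb hL1.le)).congr' ?_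
  filter_upwards [Ioo_mem_nhdsLT (show (0:ℝ) < 1 by norm_num)] with r hr
  have hrξ : ‖(r : ℂ) * ξ‖ < 1 := by
    rw [norm_mul, hξ, mul_one, Complex.norm_real, Real.norm_eq_abs, abs_of_pos hr.1]
    exact hr.2
  rw [Pi.div_apply, div_eq_iff (hden _ hrξ), h _ hrξ]

lemma isInnerFun_iff_of_mul_one_sub_conj_mul_eq {f g : ℂ → ℂ} {b : ℂ} (hb : ‖b‖ < 1)
    (h : ∀ z : ℂ, ‖z‖ < 1 → f z * (1 - conj b * g z) = g z - b) :
    IsInnerFun f ↔ IsInnerFun g := by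
  refine ⟨fun hf => hf.of_mul_one_sub_conj_mul_eq (b := -b) (by rwa [norm_neg]) fun z hz => ?_,
    fun hg => hg.of_mul_one_sub_conj_mul_eq hb h⟩
  rw [map_neg]
  linear_combination -h z hz

theorem statement4
    (μ : Measure ℂ) [IsProbabilityMeasure μ] (hμ : μ (Metric.sphere (0:ℂ) 1)ᶜ = 0)
    (Mxi : Lp ℂ 2 μ →L[ℂ] Lp ℂ 2 μ)
    (hMxi : ∀ f : Lp ℂ 2 μ, ∀ᵐ ξ ∂μ, (Mxi f) ξ = ξ * f ξ)
    (one xibar : Lp ℂ 2 μ)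
    (hone : ∀ᵐ ξ ∂μ, one ξ = 1) (hxibar : ∀ᵐ ξ ∂μ, xibar ξ = conj ξ)
    (β : ℂ) (hβ : ‖β‖ < 1)
    -- `D0` and `Ds0` are the positive square roots of `I - Û₀* Û₀` and `I - Û₀ Û₀*`
    (D0 Ds0 : Lp ℂ 2 μ →L[ℂ] Lp ℂ 2 μ)
    (hD0pos : D0.IsPositive)
    (hD0 : D0 ∘L D0 = 1 - ContinuousLinearMap.adjoint (clarkOp μ Mxi xibar one 0) ∘L
      clarkOp μ Mxi xibar one 0)
    (hDs0pos : Ds0.IsPositive)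
    (hDs0 : Ds0 ∘L Ds0 = 1 - clarkOp μ Mxi xibar one 0 ∘L
      ContinuousLinearMap.adjoint (clarkOp μ Mxi xibar one 0))
    -- `Dβ` and `Dsβ` are the positive square roots of `I - Û_β* Û_β` and `I - Û_β Û_β*`
    (Dβ Dsβ : Lp ℂ 2 μ →L[ℂ] Lp ℂ 2 μ)
    (hDβpos : Dβ.IsPositive)
    (hDβ : Dβ ∘L Dβ = 1 - ContinuousLinearMap.adjoint (clarkOp μ Mxi xibar one β) ∘L
      clarkOp μ Mxi xibar one β)
    (hDsβpos : Dsβ.IsPositive)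
    (hDsβ : Dsβ ∘L Dsβ = 1 - clarkOp μ Mxi xibar one β ∘L
      ContinuousLinearMap.adjoint (clarkOp μ Mxi xibar one β)) :
    (∀ z : ℂ, ‖z‖ < 1 →
      charF (clarkOp μ Mxi xibar one β) Dβ Dsβ xibar one z *
          (1 - conj β * charF (clarkOp μ Mxi xibar one 0) D0 Ds0 xibar one z) =
        charF (clarkOp μ Mxi xibar one 0) D0 Ds0 xibar one z - β) ∧
    (IsInnerFun (charF (clarkOp μ Mxi xibar one β) Dβ Dsβ xibar one) ↔
      IsInnerFun (charF (clarkOp μ Mxi xibar one 0) D0 Ds0 xibar one)) := by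
  simp only [clarkOp_eq_clarkPert] at hD0 hDs0 hDβ hDsβ ⊢
  have hV := mulVar_mem_unitary hμ hMxi
  have hVe := mulVar_apply_xibar hμ hMxi hone hxibar
  have he : ‖xibar‖ = 1 := by
    rw [← norm_mulVar_apply hμ hMxi, hVe, norm_L2_eq_one_of_ae_eq_one hone]
  have hθ : ∀ z : ℂ, ‖z‖ < 1 → _ := fun z hz =>
    charF_clarkPert_mul_one_sub_conj_mul hV hVe he hβ hD0pos hD0 hDs0pos hDs0 hDβpos hDβ
      hDsβpos hDsβ hz
  exact ⟨hθ, isInnerFun_iff_of_mul_one_sub_conj_mul_eq hβ hθ⟩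

end
end

section
/- Let γ ∈ 𝕋 and let M_ζ denote multiplication by the independent variable on L²(μ_γ). If V : L²(μ) → L²(μ_γ) is a unitary operator satisfying V∘Û_γ = M_ζ∘V and V(1) = 1 (the constant function one), then V(ξ̄) = γ·ζ̄, where ξ̄ and ζ̄ denote the functions ξ ↦ conj(ξ) in L²(μ) and ζ ↦ conj(ζ) in L²(μ_γ), respectively. -/
open MeasureTheory Filter ContinuousLinearMap
open scoped ENNReal Topology ComplexConjugate

noncomputable section

theorem statement17
    (μ : Measure ℂ) [IsProbabilityMeasure μ] (hμ : μ (Metric.sphere (0:ℂ) 1)ᶜ = 0)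
    (Mxi : Lp ℂ 2 μ →L[ℂ] Lp ℂ 2 μ)
    (hMxi : ∀ f : Lp ℂ 2 μ, ∀ᵐ ξ ∂μ, (Mxi f) ξ = ξ * f ξ)
    (one xibar : Lp ℂ 2 μ)
    (hone : ∀ᵐ ξ ∂μ, one ξ = 1) (hxibar : ∀ᵐ ξ ∂μ, xibar ξ = conj ξ)
    (γ : ℂ) (hγ : ‖γ‖ = 1)
    -- `μγ` is the spectral measure of `Û_γ` with respect to the cyclic vector `1`
    (μγ : Measure ℂ) [IsProbabilityMeasure μγ] (hμγsupp : μγ (Metric.sphere (0:ℂ) 1)ᶜ = 0)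
    (hμγmom : ∀ k : ℤ,
      (inner ℂ one (zpowOp (clarkOp μ Mxi xibar one γ) k one) : ℂ) = ∫ ξ, ξ ^ k ∂μγ)
    -- multiplication by the independent variable on `L²(μγ)`
    (Mzeta : Lp ℂ 2 μγ →L[ℂ] Lp ℂ 2 μγ)
    (hMzeta : ∀ f : Lp ℂ 2 μγ, ∀ᵐ ζ ∂μγ, (Mzeta f) ζ = ζ * f ζ)
    (oneγ zetabar : Lp ℂ 2 μγ)
    (honeγ : ∀ᵐ ζ ∂μγ, oneγ ζ = 1) (hzetabar : ∀ᵐ ζ ∂μγ, zetabar ζ = conj ζ)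
    -- `V` is a unitary operator intertwining `Û_γ` with `M_ζ` and sending `1` to `1`
    (V : Lp ℂ 2 μ ≃ₗᵢ[ℂ] Lp ℂ 2 μγ)
    (hVint : ∀ f : Lp ℂ 2 μ, V (clarkOp μ Mxi xibar one γ f) = Mzeta (V f))
    (hVone : V one = oneγ) :
    V xibar = γ • zetabar := by
  have hsphμ : ∀ᵐ ξ ∂μ, ‖ξ‖ = 1 := by
    have h : ∀ᵐ ξ ∂μ, ξ ∈ Metric.sphere (0:ℂ) 1 := by rw [ae_iff]; exact hμ
    filter_upwards [h] with ξ hξ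
    simpa [Complex.dist_eq] using hξ
  have hsphγ : ∀ᵐ ζ ∂μγ, ‖ζ‖ = 1 := by
    have h : ∀ᵐ ζ ∂μγ, ζ ∈ Metric.sphere (0:ℂ) 1 := by rw [ae_iff]; exact hμγsupp
    filter_upwards [h] with ζ hζ
    simpa [Complex.dist_eq] using hζ
  have hc : (inner ℂ xibar xibar : ℂ) = 1 := by
    rw [MeasureTheory.L2.inner_def]
    have h : ∀ᵐ ξ ∂μ, (inner ℂ (xibar ξ) (xibar ξ) : ℂ) = 1 := by
      filter_upwards [hxibar, hsphμ] with ξ h1 h2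
      rw [RCLike.inner_apply, h1]
      simp [Complex.conj_mul', h2]
    rw [integral_congr_ae h]
    simp
  have hM1 : Mxi xibar = one := by
    apply Lp.ext
    filter_upwards [hMxi xibar, hxibar, hsphμ, hone] with ξ h1 h2 h3 h4
    rw [h1, h2, h4, Complex.mul_conj, ← Complex.sq_norm, h3]
    norm_num
  have h1 : clarkOp μ Mxi xibar one γ xibar = γ • one := by
    simp only [clarkOp, ContinuousLinearMap.add_apply, ContinuousLinearMap.smul_apply,
      ContinuousLinearMap.smulRight_apply, innerSL_apply_apply, hc, hM1, one_smul]
    module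
  have h2 : Mzeta (V xibar) = γ • oneγ := by
    rw [← hVint, h1, LinearIsometryEquiv.map_smul, hVone]
  have h3 : Mzeta (γ • zetabar) = γ • oneγ := by
    apply Lp.ext
    filter_upwards [hMzeta (γ • zetabar), Lp.coeFn_smul γ zetabar, hzetabar, hsphγ,
      Lp.coeFn_smul γ oneγ, honeγ] with ζ e1 e2 e3 e4 e5 e6
    rw [e1, e2, e5]
    simp only [Pi.smul_apply, e3, e6, smul_eq_mul, mul_one]
    have hz : ζ * conj ζ = 1 := by
      rw [Complex.mul_conj, ← Complex.sq_norm, e4]; norm_num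
    linear_combination γ * hz
  have hira : Mzeta (V xibar - γ • zetabar) = 0 := by
    rw [map_sub, h2, h3, sub_self]
  have hd : V xibar - γ • zetabar = 0 := by
    apply Lp.ext
    have h0 : ∀ᵐ ζ ∂μγ, (Mzeta (V xibar - γ • zetabar)) ζ = 0 := by
      rw [hira]
      filter_upwards [Lp.coeFn_zero ℂ 2 μγ] with ζ h
      exact h
    filter_upwards [hMzeta (V xibar - γ • zetabar), h0, hsphγ,
      Lp.coeFn_zero ℂ 2 μγ] with ζ e1 e2 e3 e4
    rw [e4]
    have hζ : ζ ≠ 0 := by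
      intro h
      rw [h] at e3
      simp at e3
    have hmul : ζ * (V xibar - γ • zetabar) ζ = 0 := e1.symm.trans e2
    exact (mul_eq_zero.mp hmul).resolve_left hζ
  exact sub_eq_zero.mp hd

end
end
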